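/- For all positive integers s and t, R(s,t) < K(s,t). -/
import Mathlib


/-- The pair `(K(s,t), K'(s,t))` of auxiliary functions, defined for positive integers `s, t`:
`K(1,t) = 2`, `K'(1,t) = 5`; `K(s,1) = 2^s`, `K'(s,1) = 2^s + 3`; and for `s, t > 1`,
`K(s,t) = K(s,t-1) * K(s-1, K'(s,t-1))` and
`K'(s,t) = K'(s,t-1) * K(s-1, K'(s,t-1)) + K'(s-1, K'(s,t-1))`.
(The value at arguments equal to `0` is junk.) -/
def KK : ℕ → ℕ → ℕ × ℕ
  | 0, _ => (0, 0)
  | 1, _ => (2, 5)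
  | _+2, 0 => (0, 0)
  | s+2, 1 => (2^(s+2), 2^(s+2) + 3)
  | s+2, t+2 =>
    let p := KK (s+2) (t+1)
    let q := KK (s+1) p.2
    (p.1 * q.1, p.2 * q.1 + q.2)
termination_by s t => (s, t)

/-- The function `K(s,t)`. -/
def K (s t : ℕ) : ℕ := (KK s t).1

/-- The function `K'(s,t)`. -/
def K' (s t : ℕ) : ℕ := (KK s t).2

/-- The function `R(s,t)` (root triangles minus teeth of `X(s,t)`), defined for positive
integers `s, t`: `R(1,t) = 0`, `R(s,1) = 0`, and
`R(s,t) = 2 * K(s-1, K'(s,t-1)) + R(s-1, K'(s,t-1))` for `s, t > 1`.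
(The value at arguments equal to `0` is junk.) -/
def R : ℕ → ℕ → ℕ
  | 0, _ => 0
  | 1, _ => 0
  | _+2, 0 => 0
  | _+2, 1 => 0
  | s+2, t+2 => 2 * K (s+1) (K' (s+2) (t+1)) + R (s+1) (K' (s+2) (t+1))
termination_by s t => (s, t)

lemma KK_succ (s t : ℕ) :
    KK (s+2) (t+2) = ((KK (s+2) (t+1)).1 * (KK (s+1) (KK (s+2) (t+1)).2).1,
      (KK (s+2) (t+1)).2 * (KK (s+1) (KK (s+2) (t+1)).2).1 + (KK (s+1) (KK (s+2) (t+1)).2).2) := by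
  rw [KK]

lemma aux (s : ℕ) : ∀ t, 1 ≤ t → 2 ≤ K (s+1) t ∧ 1 ≤ K' (s+1) t := by
  induction s with
  | zero => intro t ht; simp [K, K', KK]
  | succ s ih =>
    intro t ht
    induction t with
    | zero => omega
    | succ t iht =>
      match t with
      | 0 =>
        constructor
        · show 2 ≤ (KK (s+2) 1).1
          rw [KK]; exact Nat.le_self_pow (by omega) 2
        · show 1 ≤ (KK (s+2) 1).2
          rw [KK]; simp
      | t+1 =>
        have h1 := iht (by omega)
        have h2 := ih (K' (s+2) (t+1)) h1.2
        simp only [K, K'] at h1 h2 ⊢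
        rw [KK_succ]
        constructor
        · calc 2 ≤ 2 * 2 := by norm_num
          _ ≤ (KK (s+2) (t+1)).1 * (KK (s+1) (KK (s+2) (t+1)).2).1 :=
              Nat.mul_le_mul h1.1 h2.1
        · simp; omega

lemma K_ge_four (s t : ℕ) (ht : 1 ≤ t) : 4 ≤ K (s+2) t := by
  match t, ht with
  | 1, _ =>
    show 4 ≤ (KK (s+2) 1).1
    rw [KK]; simp
    calc 4 = 2^2 := by norm_num
    _ ≤ 2^(s+2) := Nat.pow_le_pow_right (by norm_num) (by omega)
  | t+2, _ =>
    have h1 := aux (s+1) (t+1) (by omega)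
    have h2 := aux s (K' (s+2) (t+1)) h1.2
    show 4 ≤ (KK (s+2) (t+2)).1
    rw [KK_succ]
    simp only [K, K'] at h1 h2
    calc 4 = 2 * 2 := by norm_num
    _ ≤ _ := Nat.mul_le_mul h1.1 h2.1

/-- For all positive integers `s` and `t`, `R(s,t) < K(s,t)`. -/
theorem R_lt_K (s t : ℕ) (hs : 0 < s) (ht : 0 < t) :
    R s t < K s t := by
  induction s generalizing t with
  | zero => omega
  | succ s ih =>
    match s with
    | 0 =>
      have : R 1 t = 0 := by rw [R]
      rw [this]
      have := aux 0 t ht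
      omega
    | s+1 =>
      match t, ht with
      | 1, _ =>
        show R (s+2) 1 < K (s+2) 1
        have : R (s+2) 1 = 0 := by rw [R]
        have h4 := K_ge_four s 1 (by norm_num)
        omega
      | t+2, _ =>
        show R (s+2) (t+2) < K (s+2) (t+2)
        rw [R]
        have h1 := aux (s+1) (t+1) (by omega)
        have hx := h1.2
        have h2 := aux s (K' (s+2) (t+1)) hx
        have hr := ih (K' (s+2) (t+1)) (by omega) hx
        have h4 := K_ge_four s (t+1) (by omega)
        have hK : K (s+2) (t+2) = K (s+2) (t+1) * K (s+1) (K' (s+2) (t+1)) := by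
          simp only [K, K']; rw [KK_succ]
        rw [hK]
        have : 2 * K (s+1) (K' (s+2) (t+1)) + R (s+1) (K' (s+2) (t+1))
            < 3 * K (s+1) (K' (s+2) (t+1)) := by omega
        calc 2 * K (s+1) (K' (s+2) (t+1)) + R (s+1) (K' (s+2) (t+1))
            < 3 * K (s+1) (K' (s+2) (t+1)) := this
        _ ≤ K (s+2) (t+1) * K (s+1) (K' (s+2) (t+1)) :=
            Nat.mul_le_mul (by omega) le_rfl
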